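/- arXiv:1408.0195 — 2 statements merged into one kernel-verified Lean document; each statement's English description precedes it below -/
import Mathlib

section
/- Suppose that τ and τ′ are Salem numbers with τ′ ∈ ℚ(τ). Then ℚ(τ′) = ℚ(τ), and if moreover τ′ > τ, then τ′/τ is also a Salem number belonging to ℚ(τ). -/
/-- `z : ℂ` is a conjugate of the real algebraic number `τ`:
it is a complex root of the minimal polynomial of `τ` over `ℚ`. -/
def IsConjugateOf (z : ℂ) (τ : ℝ) : Prop :=
  Polynomial.aeval z (minpoly ℚ τ) = 0

/-- A Salem number: a real algebraic integer `τ > 1`, of degree at least 4,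
conjugate to `τ⁻¹`, all of whose conjugates other than `τ` and `τ⁻¹`
have modulus 1. -/
def IsSalem (τ : ℝ) : Prop :=
  1 < τ ∧ IsIntegral ℤ τ ∧ 4 ≤ (minpoly ℚ τ).natDegree ∧
    IsConjugateOf ((τ : ℂ))⁻¹ τ ∧
    ∀ z : ℂ, IsConjugateOf z τ → z ≠ (τ : ℂ) → z ≠ ((τ : ℂ))⁻¹ → ‖z‖ = 1


/-
Let `K = ℚ(τ)`. Since `τ⁻¹ ∈ K` is a conjugate of `τ`, there is an automorphism `ρ` of `K` with
`ρ τ = τ⁻¹`, and the embeddings `σ : K → ℂ` are the inclusion, the inclusion composed with `ρ`,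
and those with `|σ τ| = 1`. For the latter, `conj ∘ σ = σ ∘ ρ`, because both send `τ` to
`conj (σ τ) = (σ τ)⁻¹`.

Now `ρ τ'` is a real conjugate of `τ'`, so it is `τ'` or `τ'⁻¹`. If `ρ τ' = τ'`, every embedding
would send `τ'` to a real number, whereas a Salem number has non-real conjugates; hence
`ρ τ' = τ'⁻¹`, and then `|σ τ'| = 1` whenever `|σ τ| = 1`. Consequently only the inclusion fixes
`τ'`, which makes `τ'` a primitive element of `K`. The quotient `μ = τ'/τ` satisfies `ρ μ = μ⁻¹`
as well, so its conjugates `σ μ` are `μ`, `μ⁻¹` or of modulus one; a non-real conjugate of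
modulus one, its complex conjugate, `μ` and `μ⁻¹` give degree at least 4.
-/

open Polynomial IntermediateField

lemma Complex.ofReal_ne_inv_of_one_lt {r : ℝ} (hr : 1 < r) : (r : ℂ) ≠ (r : ℂ)⁻¹ := by
  rw [← Complex.ofReal_inv]
  exact_mod_cast ((inv_lt_one_of_one_lt₀ hr).trans hr).ne'

section Conjugates

variable {x : ℝ} {z : ℂ}

lemma isConjugateOf_ofReal_iff {r : ℝ} : IsConjugateOf r x ↔ aeval r (minpoly ℚ x) = 0 := by
  rw [IsConjugateOf, ← Complex.coe_algebraMap, aeval_algebraMap_apply,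
    map_eq_zero_iff _ (algebraMap ℝ ℂ).injective]

lemma isConjugateOf_self (x : ℝ) : IsConjugateOf x x :=
  isConjugateOf_ofReal_iff.mpr (minpoly.aeval ℚ x)

lemma IsConjugateOf.conj (h : IsConjugateOf z x) : IsConjugateOf (starRingEnd ℂ z) x := by
  change aeval (Complex.conjAe.toAlgHom.restrictScalars ℚ z) _ = 0
  rw [aeval_algHom_apply, h, map_zero]

lemma IsConjugateOf.isIntegral (hx : IsIntegral ℤ x) (h : IsConjugateOf z x) :
    IsIntegral ℤ z := by
  refine ⟨minpoly ℤ x, minpoly.monic hx, ?_⟩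
  rw [← aeval_def, ← aeval_map_algebraMap ℚ,
    ← minpoly.isIntegrallyClosed_eq_field_fractions' ℚ hx]
  exact h

lemma IsConjugateOf.minpoly_eq (hx : IsIntegral ℚ x) (h : IsConjugateOf z x) :
    minpoly ℚ z = minpoly ℚ x :=
  (minpoly.eq_of_irreducible_of_monic (minpoly.irreducible hx) h (minpoly.monic hx)).symm

/-- A real conjugate of modulus one would be the rational number `±1`, whose only conjugate is
itself. -/
lemma IsConjugateOf.im_ne_zero (hx : IsIntegral ℚ x) (hx1 : |x| ≠ 1) (h : IsConjugateOf z x)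
    (hz : ‖z‖ = 1) : z.im ≠ 0 := by
  intro him
  obtain ⟨q, hq, rfl⟩ : ∃ q : ℚ, |q| = 1 ∧ z = q := by
    have hre : |z.re| = 1 := by rwa [Complex.abs_re_eq_norm.mpr him]
    rcases abs_eq zero_le_one |>.mp hre with h1 | h1
    · exact ⟨1, by simp, Complex.ext (by simpa using h1) (by simpa using him)⟩
    · exact ⟨-1, by simp, Complex.ext (by simpa using h1) (by simpa using him)⟩
  have hmin := h.minpoly_eq hx
  rw [← eq_ratCast (algebraMap ℚ ℂ), minpoly.eq_X_sub_C] at hmin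
  have hxq := minpoly.aeval ℚ x
  rw [← hmin, map_sub, aeval_X, aeval_C, eq_ratCast, sub_eq_zero] at hxq
  exact hx1 (by rw [hxq]; exact_mod_cast hq)

lemma ncard_setOf_isConjugateOf (hx : IsIntegral ℚ x) :
    {z : ℂ | IsConjugateOf z x}.ncard = (minpoly ℚ x).natDegree := by
  have hroots : {z : ℂ | IsConjugateOf z x} = (minpoly ℚ x).rootSet ℂ := by
    ext z
    simp [IsConjugateOf, mem_rootSet, minpoly.ne_zero hx]
  rw [hroots, ← Nat.card_coe_set_eq, Nat.card_eq_fintype_card,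
    card_rootSet_eq_natDegree (minpoly.irreducible hx).separable (IsAlgClosed.splits _)]

lemma finite_setOf_isConjugateOf (hx : IsIntegral ℚ x) : {z : ℂ | IsConjugateOf z x}.Finite :=
  Set.finite_of_ncard_pos (by rw [ncard_setOf_isConjugateOf hx]; exact minpoly.natDegree_pos hx)

end Conjugates

namespace IsSalem

variable {τ : ℝ} {z : ℂ} (hτ : IsSalem τ)
include hτ

lemma one_lt : 1 < τ := hτ.1

lemma isIntegral : IsIntegral ℤ τ := hτ.2.1

lemma four_le_natDegree : 4 ≤ (minpoly ℚ τ).natDegree := hτ.2.2.1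

lemma isConjugateOf_inv : IsConjugateOf (τ : ℂ)⁻¹ τ := hτ.2.2.2.1

lemma norm_eq_one (hz : IsConjugateOf z τ) (hzτ : z ≠ τ) (hzinv : z ≠ (τ : ℂ)⁻¹) : ‖z‖ = 1 :=
  hτ.2.2.2.2 z hz hzτ hzinv

lemma isIntegral_rat : IsIntegral ℚ τ := hτ.isIntegral.tower_top

lemma isIntegral_inv : IsIntegral ℤ τ⁻¹ := by
  have h := hτ.isConjugateOf_inv.isIntegral hτ.isIntegral
  rwa [← Complex.ofReal_inv, ← Complex.coe_algebraMap,
    isIntegral_algebraMap_iff (algebraMap ℝ ℂ).injective] at h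

lemma im_ne_zero (hz : IsConjugateOf z τ) (hzτ : z ≠ τ) (hzinv : z ≠ (τ : ℂ)⁻¹) : z.im ≠ 0 :=
  hz.im_ne_zero hτ.isIntegral_rat ((abs_of_pos (by linarith [hτ.one_lt])).trans_ne hτ.one_lt.ne')
    (hτ.norm_eq_one hz hzτ hzinv)

lemma eq_or_eq_inv_of_isConjugateOf_ofReal {r : ℝ} (hr : IsConjugateOf r τ) :
    r = τ ∨ r = τ⁻¹ := by
  by_contra! h
  refine hτ.im_ne_zero hr (by exact_mod_cast h.1) ?_ (Complex.ofReal_im r)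
  rw [← Complex.ofReal_inv]
  exact_mod_cast h.2

lemma exists_isConjugateOf_ne : ∃ z, IsConjugateOf z τ ∧ z ≠ τ ∧ z ≠ (τ : ℂ)⁻¹ := by
  by_contra! h
  have hsub : {z : ℂ | IsConjugateOf z τ} ⊆ {(τ : ℂ), (τ : ℂ)⁻¹} := fun z hz ↦ by
    by_cases hzτ : z = τ
    · exact Or.inl hzτ
    · exact Or.inr (h z hz hzτ)
  have hcard := (Set.ncard_le_ncard hsub).trans (Set.ncard_insert_le _ _)
  rw [ncard_setOf_isConjugateOf hτ.isIntegral_rat, Set.ncard_singleton] at hcard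
  have := hτ.four_le_natDegree
  omega

end IsSalem

lemma isSalem_of_isConjugateOf {x : ℝ} {w : ℂ} (h1 : 1 < x) (hint : IsIntegral ℤ x)
    (hinv : IsConjugateOf (x : ℂ)⁻¹ x)
    (hconj : ∀ z, IsConjugateOf z x → z = x ∨ z = (x : ℂ)⁻¹ ∨ ‖z‖ = 1)
    (hw : IsConjugateOf w x) (hw1 : ‖w‖ = 1) : IsSalem x := by
  have hxQ : IsIntegral ℚ x := hint.tower_top
  have hwim : w.im ≠ 0 :=
    hw.im_ne_zero hxQ ((abs_of_pos (by linarith)).trans_ne h1.ne') hw1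
  have hreal (r : ℝ) : w ≠ r ∧ starRingEnd ℂ w ≠ r := by
    constructor <;> intro h <;> apply hwim <;> simpa using congrArg Complex.im h
  have hsub : {(x : ℂ), (x : ℂ)⁻¹, w, starRingEnd ℂ w} ⊆ {z : ℂ | IsConjugateOf z x} := by
    rintro z (rfl | rfl | rfl | rfl)
    exacts [isConjugateOf_self x, hinv, hw, hw.conj]
  have hcard := Set.ncard_le_ncard hsub (finite_setOf_isConjugateOf hxQ)
  rw [ncard_setOf_isConjugateOf hxQ, Set.ncard_insert_of_notMem, Set.ncard_insert_of_notMem,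
    Set.ncard_pair] at hcard
  · refine ⟨h1, hint, hcard, hinv, fun z hz hzx hzinv ↦ ?_⟩
    rcases hconj z hz with h | h | h
    exacts [absurd h hzx, absurd h hzinv, h]
  · exact fun h ↦ hwim (Complex.conj_eq_iff_im.mp h.symm)
  · simp only [Set.mem_insert_iff, Set.mem_singleton_iff, not_or, ← Complex.ofReal_inv]
    exact ⟨(hreal _).1.symm, (hreal _).2.symm⟩
  · simp only [Set.mem_insert_iff, Set.mem_singleton_iff, not_or]
    exact ⟨Complex.ofReal_ne_inv_of_one_lt h1, (hreal x).1.symm, (hreal x).2.symm⟩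

section Embeddings

variable {K : IntermediateField ℚ ℝ}

noncomputable def ofRealAlgHom (K : IntermediateField ℚ ℝ) : K →ₐ[ℚ] ℂ :=
  (Complex.ofRealAm.restrictScalars ℚ).comp K.val

@[simp]
lemma ofRealAlgHom_apply (x : K) : ofRealAlgHom K x = (x : ℝ) := rfl

lemma isConjugateOf_algHom_apply (σ : K →ₐ[ℚ] ℂ) (x : K) : IsConjugateOf (σ x) x := by
  rw [IsConjugateOf, ← minpoly_eq, aeval_algHom_apply, ← map_zero σ]
  exact congrArg σ (minpoly.aeval ℚ x)

lemma IsConjugateOf.exists_algHom_apply_eq [FiniteDimensional ℚ K] {x : K} {z : ℂ}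
    (h : IsConjugateOf z x) : ∃ σ : K →ₐ[ℚ] ℂ, σ x = z := by
  rw [IsConjugateOf, ← IntermediateField.minpoly_eq x] at h
  exact exists_algHom_of_splits_of_aeval (fun s ↦ ⟨.of_finite ℚ s, IsAlgClosed.splits _⟩) h

end Embeddings

namespace IsSalem

variable {τ : ℝ} (hτ : IsSalem τ)

include hτ in
lemma finiteDimensional : FiniteDimensional ℚ ℚ⟮τ⟯ :=
  adjoin.finiteDimensional hτ.isIntegral_rat

noncomputable def invAlgHom : ℚ⟮τ⟯ →ₐ[ℚ] ℚ⟮τ⟯ :=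
  (algHomAdjoinIntegralEquiv ℚ hτ.isIntegral_rat).symm
    ⟨(AdjoinSimple.gen ℚ τ)⁻¹, mem_aroots.mpr ⟨minpoly.ne_zero hτ.isIntegral_rat, by
      apply (algebraMap ℚ⟮τ⟯ ℝ).injective
      rw [← aeval_algebraMap_apply, map_zero, map_inv₀, AdjoinSimple.algebraMap_gen,
        ← isConjugateOf_ofReal_iff, Complex.ofReal_inv]
      exact hτ.isConjugateOf_inv⟩⟩

lemma invAlgHom_gen : hτ.invAlgHom (AdjoinSimple.gen ℚ τ) = (AdjoinSimple.gen ℚ τ)⁻¹ :=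
  algHomAdjoinIntegralEquiv_symm_apply_gen ℚ hτ.isIntegral_rat _

lemma conj_algHom_apply (σ : ℚ⟮τ⟯ →ₐ[ℚ] ℂ) (hσ : ‖σ (AdjoinSimple.gen ℚ τ)‖ = 1) (x : ℚ⟮τ⟯) :
    starRingEnd ℂ (σ x) = σ (hτ.invAlgHom x) := by
  have h : (Complex.conjAe.toAlgHom.restrictScalars ℚ).comp σ = σ.comp hτ.invAlgHom := by
    refine adjoin_algHom_ext ℚ fun y hy ↦ ?_
    obtain rfl := Set.mem_singleton_iff.mp hy
    change starRingEnd ℂ (σ (AdjoinSimple.gen ℚ y)) = σ (hτ.invAlgHom (AdjoinSimple.gen ℚ y))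
    rw [hτ.invAlgHom_gen, map_inv₀, Complex.inv_eq_conj hσ]
  exact DFunLike.congr_fun h x

lemma algHom_cases (σ : ℚ⟮τ⟯ →ₐ[ℚ] ℂ) :
    σ = ofRealAlgHom ℚ⟮τ⟯ ∨ σ = (ofRealAlgHom ℚ⟮τ⟯).comp hτ.invAlgHom ∨
      ‖σ (AdjoinSimple.gen ℚ τ)‖ = 1 := by
  have hext {σ' : ℚ⟮τ⟯ →ₐ[ℚ] ℂ} (h : σ (AdjoinSimple.gen ℚ τ) = σ' (AdjoinSimple.gen ℚ τ)) :
      σ = σ' :=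
    adjoin_algHom_ext ℚ fun y hy ↦ by obtain rfl := Set.mem_singleton_iff.mp hy; exact h
  by_cases h1 : σ (AdjoinSimple.gen ℚ τ) = τ
  · exact .inl (hext h1)
  by_cases h2 : σ (AdjoinSimple.gen ℚ τ) = (τ : ℂ)⁻¹
  · refine .inr (.inl (hext ?_))
    rw [h2, AlgHom.comp_apply, hτ.invAlgHom_gen, map_inv₀]
    rfl
  exact .inr (.inr (hτ.norm_eq_one (isConjugateOf_algHom_apply σ _) h1 h2))

lemma norm_algHom_apply_eq_one {x : ℚ⟮τ⟯} (hx0 : x ≠ 0) (hx : hτ.invAlgHom x = x⁻¹)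
    (σ : ℚ⟮τ⟯ →ₐ[ℚ] ℂ) (hσ : ‖σ (AdjoinSimple.gen ℚ τ)‖ = 1) : ‖σ x‖ = 1 := by
  have h : σ x * starRingEnd ℂ (σ x) = 1 := by
    rw [hτ.conj_algHom_apply σ hσ, hx, ← map_mul, mul_inv_cancel₀ hx0, map_one]
  rw [Complex.mul_conj'] at h
  exact (pow_eq_one_iff_of_nonneg (norm_nonneg _) two_ne_zero).mp (by exact_mod_cast h)

lemma im_algHom_apply_eq_zero {x : ℚ⟮τ⟯} (hx : hτ.invAlgHom x = x) (σ : ℚ⟮τ⟯ →ₐ[ℚ] ℂ) :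
    (σ x).im = 0 := by
  rcases hτ.algHom_cases σ with rfl | rfl | hσ
  · exact Complex.ofReal_im _
  · exact Complex.ofReal_im _
  · rw [← Complex.conj_eq_iff_im, hτ.conj_algHom_apply σ hσ, hx]

lemma invAlgHom_apply_eq_inv {x : ℚ⟮τ⟯} (hx : IsSalem x) : hτ.invAlgHom x = x⁻¹ := by
  have := hτ.finiteDimensional
  rcases hx.eq_or_eq_inv_of_isConjugateOf_ofReal
    (isConjugateOf_algHom_apply ((ofRealAlgHom ℚ⟮τ⟯).comp hτ.invAlgHom) x) with h | h
  · obtain ⟨z, hz, hzx, hzinv⟩ := hx.exists_isConjugateOf_ne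
    obtain ⟨σ, rfl⟩ := hz.exists_algHom_apply_eq
    exact absurd (hτ.im_algHom_apply_eq_zero (Subtype.ext h) σ) (hx.im_ne_zero hz hzx hzinv)
  · exact Subtype.ext h

lemma isSalem_of_invAlgHom_apply_eq_inv {x : ℚ⟮τ⟯} (h1 : 1 < (x : ℝ))
    (hint : IsIntegral ℤ (x : ℝ)) (hx : hτ.invAlgHom x = x⁻¹) : IsSalem x := by
  have := hτ.finiteDimensional
  have hx0 : x ≠ 0 := by rintro rfl; norm_num at h1
  obtain ⟨w, hw, hwτ, hwτinv⟩ := hτ.exists_isConjugateOf_ne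
  obtain ⟨σ, rfl⟩ := hw.exists_algHom_apply_eq (x := AdjoinSimple.gen ℚ τ)
  refine isSalem_of_isConjugateOf h1 hint ?_ (fun z hz ↦ ?_) (isConjugateOf_algHom_apply σ x)
    (hτ.norm_algHom_apply_eq_one hx0 hx σ (hτ.norm_eq_one hw hwτ hwτinv))
  · convert isConjugateOf_algHom_apply ((ofRealAlgHom ℚ⟮τ⟯).comp hτ.invAlgHom) x using 1
    simp [hx]
  · obtain ⟨σ', rfl⟩ := hz.exists_algHom_apply_eq
    rcases hτ.algHom_cases σ' with rfl | rfl | hσ'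
    · exact .inl rfl
    · exact .inr (.inl (by simp [hx]))
    · exact .inr (.inr (hτ.norm_algHom_apply_eq_one hx0 hx σ' hσ'))

include hτ in
lemma adjoin_eq_of_isSalem {x : ℚ⟮τ⟯} (hx : IsSalem x) : ℚ⟮(x : ℝ)⟯ = ℚ⟮τ⟯ := by
  have := hτ.finiteDimensional
  have hx0 : x ≠ 0 := by rintro rfl; exact absurd hx.one_lt (by norm_num)
  have hρx := hτ.invAlgHom_apply_eq_inv hx
  have htop : ℚ⟮x⟯ = ⊤ := by
    refine (Field.primitive_element_iff_algHom_eq_of_eval ℚ ℂ (fun _ ↦ IsAlgClosed.splits _) x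
      (ofRealAlgHom ℚ⟮τ⟯)).mpr fun σ hσ ↦ ?_
    rcases hτ.algHom_cases σ with rfl | rfl | hσ1
    · rfl
    · rw [AlgHom.comp_apply, hρx, ofRealAlgHom_apply, ofRealAlgHom_apply,
        IntermediateField.coe_inv, Complex.ofReal_inv] at hσ
      exact absurd hσ (Complex.ofReal_ne_inv_of_one_lt hx.one_lt)
    · have := hτ.norm_algHom_apply_eq_one hx0 hρx σ hσ1
      rw [← hσ, ofRealAlgHom_apply, Complex.norm_real,
        Real.norm_of_nonneg (by linarith [hx.one_lt])] at this
      exact absurd this hx.one_lt.ne'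
  exact (lift_adjoin_simple _ _ x).symm.trans ((congrArg lift htop).trans (lift_top _ _))

include hτ in
lemma isSalem_div {x : ℚ⟮τ⟯} (hx : IsSalem x) (hlt : τ < x) : IsSalem (x / τ) := by
  refine hτ.isSalem_of_invAlgHom_apply_eq_inv (x := x / AdjoinSimple.gen ℚ τ)
    ((one_lt_div (zero_lt_one.trans hτ.one_lt)).mpr hlt) ?_ ?_
  · rw [IntermediateField.coe_div, div_eq_mul_inv]
    exact hx.isIntegral.mul hτ.isIntegral_inv
  · rw [map_div₀, hτ.invAlgHom_apply_eq_inv hx, hτ.invAlgHom_gen, inv_div_inv, inv_div]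

end IsSalem

open IntermediateField in
theorem salem_in_salem_field (τ τ' : ℝ) (hτ : IsSalem τ) (hτ' : IsSalem τ')
    (hmem : τ' ∈ ℚ⟮τ⟯) :
    ℚ⟮τ'⟯ = ℚ⟮τ⟯ ∧ (τ < τ' → IsSalem (τ' / τ) ∧ τ' / τ ∈ ℚ⟮τ⟯) :=
  ⟨hτ.adjoin_eq_of_isSalem (x := ⟨τ', hmem⟩) hτ', fun hlt ↦
    ⟨hτ.isSalem_div (x := ⟨τ', hmem⟩) hτ' hlt, div_mem hmem (mem_adjoin_simple_self ℚ τ)⟩⟩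
end

section
/- The polynomial L(z) = z¹⁰ + z⁹ − z⁷ − z⁶ − z⁵ − z⁴ − z³ + z + 1 is irreducible over ℚ, has exactly one real root τ₁₀ greater than 1, this root satisfies 1.17 < τ₁₀ < 1.18, and τ₁₀ is a Salem number of degree 10. -/
open Polynomial in
/-- Lehmer's polynomial. -/
noncomputable def lehmerPoly : Polynomial ℚ :=
  X ^ 10 + X ^ 9 - X ^ 7 - X ^ 6 - X ^ 5 - X ^ 4 - X ^ 3 + X + 1

/-!
Write `L(z) = z⁵ Q(z + z⁻¹)` with `Q = X⁵ + X⁴ - 5X³ - 5X² + 4X + 3`. The real root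
`τ ∈ (1.17, 1.18)` of `L` gives the root `τ + τ⁻¹ > 2` of `Q`, and four sign changes of `Q` on
`(-2, 1)` give the other four, so every root `w` of `Q` is real. Each root `z` of `L` solves
`z + z⁻¹ = w`: for `w = τ + τ⁻¹` this gives `z ∈ {τ, τ⁻¹}`, and for `|w| < 2` it gives `|z| = 1`.

Let `m` be the minimal polynomial of `τ`. If `τ⁻¹` were not a root of `m`, the integer `m(0)` would
have absolute value `τ`. Any irreducible factor of `L` other than `m` has all its roots on the unit
circle, so is cyclotomic by Kronecker's theorem; but `Φ_d(2) ∣ L(2) = 1291`, a prime, forces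
`2 ^ d ≡ 1 (mod 1291)`, hence `43 ∣ d` and `φ(d) ≥ 42 > 10`. Thus `L` is a power of `m`, and
equals `m` because `τ` is a simple root.
-/

open Polynomial Set

theorem exists_mem_Ioo_eq_zero_of_mul_neg {f : ℝ → ℝ} (hf : Continuous f) {a b : ℝ}
    (hab : a ≤ b) (h : f a * f b < 0) : ∃ x ∈ Ioo a b, f x = 0 := by
  rcases mul_neg_iff.mp h with ⟨ha, hb⟩ | ⟨ha, hb⟩
  · exact intermediate_value_Ioo' hab hf.continuousOn ⟨hb, ha⟩
  · exact intermediate_value_Ioo hab hf.continuousOn ⟨ha, hb⟩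

theorem exists_ofReal_eq_of_card_roots_eq_natDegree {p : ℝ[X]} (hp : p ≠ 0)
    (hroots : Multiset.card p.roots = p.natDegree) {w : ℂ} (hw : aeval w p = 0) :
    ∃ x ∈ p.roots, (x : ℂ) = w := by
  have hmap : p.roots.map (algebraMap ℝ ℂ) = (p.map (algebraMap ℝ ℂ)).roots :=
    roots_map_of_injective_of_card_eq_natDegree (algebraMap ℝ ℂ).injective hroots
  have hw' : w ∈ (p.map (algebraMap ℝ ℂ)).roots := by
    rwa [mem_roots (map_ne_zero hp), IsRoot, eval_map_algebraMap]
  rw [← hmap] at hw'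
  exact Multiset.mem_map.mp hw'

theorem eq_or_eq_inv_of_add_inv_eq_add_inv {K : Type*} [Field K] {z t : K} (hz : z ≠ 0)
    (ht : t ≠ 0) (h : z + z⁻¹ = t + t⁻¹) : z = t ∨ z = t⁻¹ := by
  have : (z - t) * (z * t - 1) = 0 := by
    field_simp at h
    linear_combination h
  rcases mul_eq_zero.mp this with h | h
  · exact Or.inl (sub_eq_zero.mp h)
  · exact Or.inr (eq_inv_of_mul_eq_one_left (sub_eq_zero.mp h))

theorem Complex.norm_eq_one_of_add_inv_eq_ofReal {z : ℂ} (hz : z ≠ 0) {x : ℝ} (hx : |x| < 2)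
    (h : z + z⁻¹ = x) : ‖z‖ = 1 := by
  have hq : z ^ 2 - x * z + 1 = 0 := by
    field_simp at h
    linear_combination h
  have hre : z.re ^ 2 - z.im ^ 2 - x * z.re + 1 = 0 := by
    simpa [sq] using congrArg Complex.re hq
  have him : z.im * (2 * z.re - x) = 0 := by
    have := congrArg Complex.im hq
    simp only [sq, add_im, sub_im, mul_im, ofReal_re, ofReal_im, zero_mul, add_zero, one_im,
      zero_im] at this
    linear_combination this
  rw [← pow_eq_one_iff_of_nonneg (norm_nonneg z) two_ne_zero, Complex.sq_norm,
    Complex.normSq_apply]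
  rcases mul_eq_zero.mp him with h0 | hx'
  · rw [abs_lt] at hx
    nlinarith [sq_nonneg (2 * z.re - x)]
  · linear_combination -hre + z.re * hx'

theorem Complex.isOfFinOrder_of_forall_norm_eq_one {z : ℂ} (hz : IsIntegral ℤ z)
    (h : ∀ w : ℂ, aeval w (minpoly ℚ z) = 0 → ‖w‖ = 1) : IsOfFinOrder z := by
  let K := IntermediateField.adjoin ℚ ({z} : Set ℂ)
  have : FiniteDimensional ℚ K := IntermediateField.adjoin.finiteDimensional hz.tower_top
  have : NumberField K := ⟨⟩
  let x : K := IntermediateField.AdjoinSimple.gen ℚ z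
  have hgen : algebraMap K ℂ x = z := IntermediateField.AdjoinSimple.algebraMap_gen ℚ z
  have hinj : Function.Injective (algebraMap K ℂ) := (algebraMap K ℂ).injective
  have hx : IsIntegral ℤ x := by rwa [← isIntegral_algebraMap_iff hinj, hgen]
  have hconj (φ : K →+* ℂ) : ‖φ x‖ = 1 := by
    refine h (φ.toRatAlgHom x) ?_
    rw [← hgen, minpoly.algebraMap_eq hinj, aeval_algHom_apply, minpoly.aeval, map_zero]
  obtain ⟨n, hn, hxn⟩ := NumberField.Embeddings.pow_eq_one_of_norm_eq_one K ℂ hx hconj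
  exact isOfFinOrder_iff_pow_eq_one.mpr ⟨n, hn, by rw [← hgen, ← map_pow, hxn, map_one]⟩

theorem aeval_ofReal (p : ℚ[X]) (x : ℝ) : aeval (x : ℂ) p = aeval x p :=
  aeval_algebraMap_apply ℂ x p

def HasSalemRoots (f : ℚ[X]) (τ : ℝ) : Prop :=
  ∀ z : ℂ, aeval z f = 0 → z = τ ∨ z = (τ : ℂ)⁻¹ ∨ ‖z‖ = 1

theorem HasSalemRoots.eq_of_one_lt {f : ℚ[X]} {τ σ : ℝ} (hf : HasSalemRoots f τ) (h1 : 1 < τ)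
    (hσ : aeval σ f = 0) (hσ1 : 1 < σ) : σ = τ := by
  rcases hf σ (by rw [aeval_ofReal, hσ, Complex.ofReal_zero]) with h | h | h
  · exact_mod_cast h
  · rw [← Complex.ofReal_inv, Complex.ofReal_inj] at h
    linarith [inv_lt_one_of_one_lt₀ h1]
  · rw [Complex.norm_real, Real.norm_of_nonneg (by linarith)] at h
    linarith

theorem HasSalemRoots.isConjugateOf_inv {τ : ℝ} (hconj : HasSalemRoots (minpoly ℚ τ) τ)
    (hτ : IsIntegral ℤ τ) (h1 : 1 < τ) (h2 : τ < 2) : IsConjugateOf (τ : ℂ)⁻¹ τ := by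
  by_contra hinv
  set R := ((minpoly ℚ τ).map (algebraMap ℚ ℂ)).roots
  have hmem (z : ℂ) : z ∈ R ↔ IsConjugateOf z τ := by
    rw [mem_roots (map_ne_zero (minpoly.ne_zero hτ.tower_top)), IsRoot, eval_map_algebraMap]
    rfl
  have hnodup : R.Nodup := nodup_roots (minpoly.irreducible hτ.tower_top).separable.map
  have hτR : (τ : ℂ) ∈ R := by
    rw [hmem, IsConjugateOf, aeval_ofReal, minpoly.aeval, Complex.ofReal_zero]
  -- all conjugates but `τ` lie on the unit circle, so the integer `(minpoly ℚ τ).coeff 0` has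
  -- absolute value `τ`
  have hprod : ‖R.prod‖ = τ := by
    rw [← Multiset.cons_erase hτR, Multiset.prod_cons, norm_mul, Complex.norm_real,
      Real.norm_of_nonneg (by linarith)]
    suffices ‖(R.erase τ).prod‖ = 1 by rw [this, mul_one]
    refine Multiset.prod_induction (‖·‖ = 1) _ (fun a b ha hb ↦ by simp [ha, hb]) norm_one ?_
    intro z hz
    rw [hnodup.mem_erase_iff] at hz
    rcases hconj z ((hmem z).mp hz.2) with h | h | h
    · exact absurd h hz.1
    · exact absurd (h ▸ (hmem z).mp hz.2) hinv
    · exact h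
  obtain ⟨n, hn⟩ : ∃ n : ℤ, (minpoly ℚ τ).coeff 0 = n :=
    ⟨_, by rw [minpoly.isIntegrallyClosed_eq_field_fractions' ℚ hτ, coeff_map, eq_intCast]⟩
  have hcoeff := Splits.coeff_zero_eq_prod_roots_of_monic (IsAlgClosed.splits _)
    ((minpoly.monic hτ.tower_top).map (algebraMap ℚ ℂ))
  rw [coeff_map, hn, map_intCast] at hcoeff
  have habs : |(n : ℝ)| = τ := by
    rw [← Complex.norm_intCast, hcoeff, norm_mul, norm_pow, norm_neg, norm_one, one_pow,
      one_mul, hprod]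
  rw [← Int.cast_abs] at habs
  have : (1 : ℤ) < |n| := by exact_mod_cast habs ▸ h1
  have : |n| < 2 := by exact_mod_cast habs ▸ h2
  omega

theorem eq_minpoly_of_forall_irreducible_dvd {K L : Type*} [Field K] [Field L] [Algebra K L]
    {f : K[X]} {x : L} (hf : f.Monic) (hx : aeval x f = 0) (hx' : aeval x (derivative f) ≠ 0)
    (h : ∀ p : K[X], p.Monic → Irreducible p → p ∣ f → p = minpoly K x) :
    f = minpoly K x := by
  obtain ⟨g, rfl⟩ := minpoly.dvd K x hx
  have hg : g.Monic := (minpoly.monic ⟨_, hf, by rwa [← aeval_def]⟩).of_mul_monic_left hf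
  suffices g = 1 by rw [this, mul_one]
  by_contra hg1
  obtain ⟨p, hpm, hpi, hpg⟩ := exists_monic_irreducible_factor g (hg.isUnit_iff.not.mpr hg1)
  rw [h p hpm hpi (dvd_mul_of_dvd_right hpg _)] at hpg
  obtain ⟨c, rfl⟩ := hpg
  apply hx'
  simp [derivative_mul, minpoly.aeval]

theorem pow_eq_one_of_cyclotomic_dvd {F : ℤ[X]} {d b p : ℕ} [Fact p.Prime] (hd : 2 ≤ d)
    (hb : 2 ≤ b) (hF : F.eval (b : ℤ) = p) (h : cyclotomic d ℤ ∣ F) : (b : ZMod p) ^ d = 1 := by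
  have hdvd : (cyclotomic d ℤ).eval (b : ℤ) ∣ p := hF ▸ eval_dvd h
  have hgt : 1 < ((cyclotomic d ℤ).eval (b : ℤ)).natAbs :=
    lt_of_le_of_lt (by omega) (sub_one_lt_natAbs_cyclotomic_eval hd (by omega))
  have heq : ((cyclotomic d ℤ).eval (b : ℤ)).natAbs = p :=
    ((Fact.out : p.Prime).eq_one_or_self_of_dvd _ (Int.natAbs_dvd_natAbs.mpr hdvd)).resolve_left
      hgt.ne'
  have hp : (p : ℤ) ∣ (b : ℤ) ^ d - 1 := by
    refine (Int.natCast_dvd.mpr heq.symm.dvd).trans ?_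
    simpa using eval_dvd (x := (b : ℤ)) (cyclotomic.dvd_X_pow_sub_one d ℤ)
  rw [← ZMod.intCast_zmod_eq_zero_iff_dvd] at hp
  push_cast at hp
  exact sub_eq_zero.mp hp

theorem HasSalemRoots.minpoly_eq {f : ℚ[X]} {τ : ℝ} (hf : f.Monic)
    (hint : ∀ z : ℂ, aeval z f = 0 → IsIntegral ℤ z) (hτ : aeval τ f = 0)
    (hτ' : aeval τ (derivative f) ≠ 0) (h1 : 1 < τ) (h2 : τ < 2)
    (hroots : HasSalemRoots f τ) (hfin : ∀ z : ℂ, aeval z f = 0 → ¬IsOfFinOrder z) :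
    minpoly ℚ τ = f := by
  have hτint : IsIntegral ℤ τ :=
    (isIntegral_algebraMap_iff (algebraMap ℝ ℂ).injective).mp
      (hint τ (by rw [aeval_ofReal, hτ, Complex.ofReal_zero]))
  have hτQ : IsIntegral ℚ τ := hτint.tower_top
  have hof {p : ℚ[X]} (hp : p ∣ f) {z : ℂ} (hz : aeval z p = 0) : aeval z f = 0 := by
    obtain ⟨q, rfl⟩ := hp
    rw [map_mul, hz, zero_mul]
  have hinv : IsConjugateOf (τ : ℂ)⁻¹ τ :=
    HasSalemRoots.isConjugateOf_inv (fun z hz ↦ hroots z (hof (minpoly.dvd ℚ τ hτ) hz)) hτint h1 h2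
  have hminpoly {w : ℂ} (hw : w = τ ∨ w = (τ : ℂ)⁻¹) : minpoly ℚ τ = minpoly ℚ w := by
    refine minpoly.eq_of_irreducible_of_monic (minpoly.irreducible hτQ) ?_ (minpoly.monic hτQ)
    rcases hw with rfl | rfl
    · rw [aeval_ofReal, minpoly.aeval, Complex.ofReal_zero]
    · exact hinv
  refine (eq_minpoly_of_forall_irreducible_dvd hf hτ hτ' fun p hpm hpi hpf ↦ ?_).symm
  have hp {w : ℂ} (hw : aeval w p = 0) : p = minpoly ℚ w :=
    minpoly.eq_of_irreducible_of_monic hpi hw hpm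
  by_contra hne
  -- otherwise all roots of `p` lie on the unit circle, so by Kronecker they are roots of unity
  obtain ⟨z, hz⟩ := IsAlgClosed.exists_aeval_eq_zero ℂ p (degree_pos_of_irreducible hpi).ne'
  refine hfin z (hof hpf hz) (Complex.isOfFinOrder_of_forall_norm_eq_one (hint z (hof hpf hz)) ?_)
  intro w hw
  rw [← hp hz] at hw
  by_cases hτw : w = τ ∨ w = (τ : ℂ)⁻¹
  · exact absurd ((hp hw).trans (hminpoly hτw).symm) hne
  · exact (or_assoc.mpr (hroots w (hof hpf hw))).resolve_left hτw

theorem HasSalemRoots.isSalem {τ : ℝ} (hroots : HasSalemRoots (minpoly ℚ τ) τ)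
    (hτ : IsIntegral ℤ τ) (h1 : 1 < τ) (h2 : τ < 2) (hdeg : 4 ≤ (minpoly ℚ τ).natDegree) :
    IsSalem τ :=
  ⟨h1, hτ, hdeg, hroots.isConjugateOf_inv hτ h1 h2, fun z hz hzτ hzτ' ↦
    (or_assoc.mpr (hroots z hz)).resolve_left (not_or.mpr ⟨hzτ, hzτ'⟩)⟩

noncomputable def lehmerPolyInt : ℤ[X] :=
  X ^ 10 + X ^ 9 - X ^ 7 - X ^ 6 - X ^ 5 - X ^ 4 - X ^ 3 + X + 1

theorem map_lehmerPolyInt : lehmerPolyInt.map (algebraMap ℤ ℚ) = lehmerPoly := by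
  simp [lehmerPolyInt, lehmerPoly]

theorem lehmerPolyInt_monic : lehmerPolyInt.Monic := by
  unfold lehmerPolyInt
  monicity!

theorem lehmerPoly_monic : lehmerPoly.Monic :=
  map_lehmerPolyInt ▸ lehmerPolyInt_monic.map _

theorem lehmerPoly_natDegree : lehmerPoly.natDegree = 10 := by
  unfold lehmerPoly
  compute_degree!

theorem aeval_lehmerPoly {A : Type*} [CommRing A] [Algebra ℚ A] (x : A) :
    aeval x lehmerPoly = x ^ 10 + x ^ 9 - x ^ 7 - x ^ 6 - x ^ 5 - x ^ 4 - x ^ 3 + x + 1 := by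
  simp [lehmerPoly]

theorem isIntegral_of_aeval_lehmerPoly_eq_zero {A : Type*} [CommRing A] [Algebra ℚ A] {x : A}
    (hx : aeval x lehmerPoly = 0) : IsIntegral ℤ x :=
  ⟨lehmerPolyInt, lehmerPolyInt_monic, by
    rwa [← aeval_def, ← aeval_map_algebraMap ℚ, map_lehmerPolyInt]⟩

theorem forty_three_dvd_of_two_pow_eq_one {d : ℕ} (h : (2 : ZMod 1291) ^ d = 1) : 43 ∣ d := by
  have h2 : (2 : ZMod 1291) ≠ 0 := by decide
  have h30 : (2 : ZMod 1291) ^ 30 ≠ 1 := by decide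
  have : Fact (Nat.Prime 1291) := ⟨by norm_num⟩
  have hfermat : orderOf (2 : ZMod 1291) ∣ 30 * 43 :=
    orderOf_dvd_of_pow_eq_one (ZMod.pow_card_sub_one_eq_one h2)
  refine Nat.dvd_trans ?_ (orderOf_dvd_of_pow_eq_one h)
  by_contra h43
  have hcop : (orderOf (2 : ZMod 1291)).Coprime 43 :=
    Nat.coprime_comm.mp ((Nat.Prime.coprime_iff_not_dvd (by norm_num)).mpr h43)
  exact h30 (orderOf_dvd_iff_pow_eq_one.mp (hcop.dvd_of_dvd_mul_right hfermat))

theorem not_isOfFinOrder_of_aeval_lehmerPoly_eq_zero {K : Type*} [Field K] [CharZero K] {z : K}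
    (hz : aeval z lehmerPoly = 0) : ¬IsOfFinOrder z := by
  intro hfin
  set d := orderOf z
  have hd : 0 < d := hfin.orderOf_pos
  have hmin : minpoly ℚ z = cyclotomic d ℚ := (cyclotomic_eq_minpoly_rat (.orderOf z) hd).symm
  have hdvd : cyclotomic d ℚ ∣ lehmerPoly := hmin ▸ minpoly.dvd ℚ z hz
  have hd2 : 2 ≤ d := by
    by_contra! hd1
    obtain rfl : z = 1 := orderOf_eq_one_iff.mp (by omega)
    norm_num [aeval_lehmerPoly] at hz
  have hdvdZ : cyclotomic d ℤ ∣ lehmerPolyInt := by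
    rwa [← map_dvd_map (algebraMap ℤ ℚ) (RingHom.injective_int _) (cyclotomic.monic d ℤ),
      map_cyclotomic, map_lehmerPolyInt]
  have : Fact (Nat.Prime 1291) := ⟨by norm_num⟩
  have h43 : 43 ∣ d := forty_three_dvd_of_two_pow_eq_one <| by
    exact_mod_cast pow_eq_one_of_cyclotomic_dvd (b := 2) hd2 le_rfl
      (by simp [lehmerPolyInt]) hdvdZ
  have : 42 ≤ d.totient := by
    simpa [Nat.totient_prime (by norm_num : Nat.Prime 43)] using
      Nat.le_of_dvd (Nat.totient_pos.mpr hd) (Nat.totient_dvd_of_dvd h43)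
  have := natDegree_le_of_dvd hdvd lehmerPoly_monic.ne_zero
  rw [natDegree_cyclotomic, lehmerPoly_natDegree] at this
  omega

theorem aeval_derivative_lehmerPoly_pos {x : ℝ} (hx : 1.17 ≤ x) :
    0 < aeval x (derivative lehmerPoly) := by
  have hder : aeval x (derivative lehmerPoly) =
      10 * x ^ 9 + 9 * x ^ 8 - 7 * x ^ 6 - 6 * x ^ 5 - 5 * x ^ 4 - 4 * x ^ 3 - 3 * x ^ 2 + 1 := by
    simp only [lehmerPoly, derivative_sub, derivative_X_pow_succ, Nat.cast_ofNat,
      map_add, map_one, derivative_X, derivative_one, add_zero, aeval_sub, map_mul, aeval_C,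
      eq_ratCast, Rat.cast_ofNat, map_pow, aeval_X]
    ring
  have h1 : 1 ≤ x := by linarith
  -- `x² > 25/19`, and every term of degree below 8 is at most its coefficient times `x⁶`
  have hx6 : 25 * x ^ 6 < 19 * x ^ 8 :=
    calc 25 * x ^ 6 < 19 * x ^ 2 * x ^ 6 :=
          mul_lt_mul_of_pos_right (by nlinarith) (by positivity)
      _ = 19 * x ^ 8 := by ring
  have h5 : x ^ 5 ≤ x ^ 6 := pow_le_pow_right₀ h1 (by norm_num)
  have h4 : x ^ 4 ≤ x ^ 6 := pow_le_pow_right₀ h1 (by norm_num)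
  have h3 : x ^ 3 ≤ x ^ 6 := pow_le_pow_right₀ h1 (by norm_num)
  have h2 : x ^ 2 ≤ x ^ 6 := pow_le_pow_right₀ h1 (by norm_num)
  have h8 : x ^ 8 ≤ x ^ 9 := pow_le_pow_right₀ h1 (by norm_num)
  rw [hder]
  linarith

theorem ne_zero_of_aeval_lehmerPoly_eq_zero {A : Type*} [CommRing A] [Nontrivial A]
    [Algebra ℚ A] {x : A} (hx : aeval x lehmerPoly = 0) : x ≠ 0 := by
  rintro rfl
  simp [aeval_lehmerPoly] at hx

noncomputable def lehmerTracePoly : ℝ[X] :=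
  X ^ 5 + X ^ 4 - 5 * X ^ 3 - 5 * X ^ 2 + 4 * X + 3

theorem aeval_add_inv_lehmerTracePoly_eq_zero {K : Type*} [Field K] [CharZero K] [Algebra ℝ K]
    {z : K} (hz : aeval z lehmerPoly = 0) : aeval (z + z⁻¹) lehmerTracePoly = 0 := by
  have hz0 := ne_zero_of_aeval_lehmerPoly_eq_zero hz
  have hpal : aeval z lehmerPoly = z ^ 5 * aeval (z + z⁻¹) lehmerTracePoly := by
    simp only [aeval_lehmerPoly, lehmerTracePoly, map_add, map_sub, map_mul, map_pow, aeval_X,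
      map_ofNat]
    field_simp
    ring
  rw [hpal] at hz
  exact (mul_eq_zero.mp hz).resolve_left (pow_ne_zero 5 hz0)

theorem lehmerTracePoly_root_cases {σ : ℝ} (hσ : 2 < σ) (hQσ : aeval σ lehmerTracePoly = 0)
    {w : ℂ} (hw : aeval w lehmerTracePoly = 0) : w = σ ∨ ∃ x : ℝ, |x| < 2 ∧ w = x := by
  have hmonic : lehmerTracePoly.Monic := by unfold lehmerTracePoly; monicity!
  have hdeg : lehmerTracePoly.natDegree = 5 := by unfold lehmerTracePoly; compute_degree!
  have hivt {a b : ℝ} (hab : a ≤ b) (h : lehmerTracePoly.eval a * lehmerTracePoly.eval b < 0) :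
      ∃ x ∈ Ioo a b, x ∈ lehmerTracePoly.roots := by
    obtain ⟨x, hx, hx0⟩ := exists_mem_Ioo_eq_zero_of_mul_neg lehmerTracePoly.continuous hab h
    exact ⟨x, hx, (mem_roots hmonic.ne_zero).mpr hx0⟩
  obtain ⟨x₁, ⟨h₁, h₁'⟩, hx₁⟩ := hivt (a := -2) (b := -17 / 10) (by norm_num)
    (by norm_num [lehmerTracePoly])
  obtain ⟨x₂, ⟨h₂, h₂'⟩, hx₂⟩ := hivt (a := -17 / 10) (b := -1) (by norm_num)
    (by norm_num [lehmerTracePoly])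
  obtain ⟨x₃, ⟨h₃, h₃'⟩, hx₃⟩ := hivt (a := -1) (b := 0) (by norm_num)
    (by norm_num [lehmerTracePoly])
  obtain ⟨x₄, ⟨h₄, h₄'⟩, hx₄⟩ := hivt (a := 0) (b := 1) (by norm_num)
    (by norm_num [lehmerTracePoly])
  have hσroot : σ ∈ lehmerTracePoly.roots := by
    rwa [mem_roots hmonic.ne_zero, IsRoot, ← coe_aeval_eq_eval]
  -- five distinct real roots of a quintic are all of its roots
  set s : Multiset ℝ := {x₁, x₂, x₃, x₄, σ}
  have hnodup : s.Nodup := by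
    simp only [s, Multiset.insert_eq_cons, Multiset.nodup_cons, Multiset.mem_cons,
      Multiset.mem_singleton, Multiset.nodup_singleton, not_or, and_true]
    refine ⟨⟨?_, ?_, ?_, ?_⟩, ⟨?_, ?_, ?_⟩, ⟨?_, ?_⟩, ?_⟩ <;> intro h <;> subst h <;> linarith
  have hs : s = lehmerTracePoly.roots := by
    refine Multiset.eq_of_le_of_card_le ((Multiset.le_iff_subset hnodup).mpr ?_) ?_
    · simp [s, Multiset.insert_eq_cons, Multiset.cons_subset, hx₁, hx₂, hx₃, hx₄, hσroot]
    · simpa [s, hdeg] using card_roots' lehmerTracePoly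
  obtain ⟨x, hx, rfl⟩ := exists_ofReal_eq_of_card_roots_eq_natDegree hmonic.ne_zero
    (by simp [← hs, s, hdeg]) hw
  simp only [← hs, s, Multiset.insert_eq_cons, Multiset.mem_cons, Multiset.mem_singleton] at hx
  rcases hx with rfl | rfl | rfl | rfl | rfl
  all_goals first
    | exact Or.inl rfl
    | exact Or.inr ⟨_, abs_lt.mpr ⟨by linarith, by linarith⟩, rfl⟩

theorem lehmerPoly_root_cases :
    ∃ τ : ℝ, aeval τ lehmerPoly = 0 ∧ 1.17 < τ ∧ τ < 1.18 ∧ HasSalemRoots lehmerPoly τ := by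
  obtain ⟨τ, ⟨h1, h2⟩, hτ⟩ := exists_mem_Ioo_eq_zero_of_mul_neg
    (a := 1.17) (b := 1.18) lehmerPoly.continuous_aeval (by norm_num)
    (by norm_num [aeval_lehmerPoly])
  refine ⟨τ, hτ, h1, h2, fun z hz ↦ ?_⟩
  have hτ0 : (τ : ℂ) ≠ 0 := Complex.ofReal_ne_zero.mpr (by linarith)
  have hσ : 2 < τ + τ⁻¹ := by
    have : τ + τ⁻¹ - 2 = (τ - 1) ^ 2 / τ := by field_simp; ring
    nlinarith [div_pos (pow_pos (by linarith : 0 < τ - 1) 2) (by linarith : 0 < τ)]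
  rcases lehmerTracePoly_root_cases hσ (aeval_add_inv_lehmerTracePoly_eq_zero hτ)
    (aeval_add_inv_lehmerTracePoly_eq_zero hz) with h | ⟨x, hx, h⟩
  · push_cast at h
    exact (eq_or_eq_inv_of_add_inv_eq_add_inv (ne_zero_of_aeval_lehmerPoly_eq_zero hz) hτ0 h).imp
      id Or.inl
  · exact Or.inr <| Or.inr <|
      Complex.norm_eq_one_of_add_inv_eq_ofReal (ne_zero_of_aeval_lehmerPoly_eq_zero hz) hx h

theorem lehmer_smallest_known_salem :
    Irreducible lehmerPoly ∧
      ∃ τ : ℝ, Polynomial.aeval τ lehmerPoly = 0 ∧ 1 < τ ∧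
        (∀ σ : ℝ, Polynomial.aeval σ lehmerPoly = 0 → 1 < σ → σ = τ) ∧
        (1.17 : ℝ) < τ ∧ τ < (1.18 : ℝ) ∧ IsSalem τ ∧
        (minpoly ℚ τ).natDegree = 10 := by
  obtain ⟨τ, hτ, h1, h2, hroots⟩ := lehmerPoly_root_cases
  have hint : IsIntegral ℤ τ := isIntegral_of_aeval_lehmerPoly_eq_zero hτ
  have hmin : minpoly ℚ τ = lehmerPoly :=
    hroots.minpoly_eq lehmerPoly_monic (fun _ ↦ isIntegral_of_aeval_lehmerPoly_eq_zero) hτ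
      (aeval_derivative_lehmerPoly_pos h1.le).ne' (by linarith) (by linarith)
      (fun _ ↦ not_isOfFinOrder_of_aeval_lehmerPoly_eq_zero)
  have hdeg : (minpoly ℚ τ).natDegree = 10 := by rw [hmin, lehmerPoly_natDegree]
  refine ⟨hmin ▸ minpoly.irreducible hint.tower_top, τ, hτ, by linarith,
    fun σ hσ hσ1 ↦ hroots.eq_of_one_lt (by linarith) hσ hσ1, h1, h2, ?_, hdeg⟩
  exact (hmin ▸ hroots).isSalem hint (by linarith) (by linarith) (by omega)
end
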